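/- Let w : ℝ → ℝ be differentiable on (0, ∞) with w t > 0 for all t > 0. Assume: (i) for every t > 0, the functions r ↦ r⁻⁴ · w r and r ↦ r⁻² · (deriv w r)² / (w r) are Lebesgue integrable on (t, ∞); (ii) r⁻³ · w r → 0 as r → ∞; and (iii) for every t > 0, t⁻² · deriv w t ≤ −2·t⁻³ · w t + 6 · ∫_{(t,∞)} r⁻⁴ · w r dr − (3/4) · ∫_{(t,∞)} r⁻² · (deriv w r)² / (w r) dr + 4π/t. Then for every t > 0, deriv w t / t − w t / t² − 4π ≤ 0; equivalently, the derivative of t ↦ w(t)/t − 4πt is nonpositive on (0, ∞). -/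

import Mathlib

/-!
Put `g r = w r / r ^ 3`, so that `g' = -3 w / r ^ 4 + w' / r ^ 3`. Completing the square,
`6 w / r ^ 4 - (3/4) w' ^ 2 / (r ^ 2 w) = -3 g' - 3 (r w' - 2 w) ^ 2 / (4 r ^ 4 w) ≤ -3 g'`,
and since `g → 0` at infinity, integrating over `(t, ∞)` bounds the integral terms of the
hypothesis by `3 g t`. The hypothesis then reads `w' t / t ^ 2 ≤ w t / t ^ 3 + 4π / t`.
-/

open MeasureTheory Filter Real

theorem hasDerivAt_inv_pow_mul {f : ℝ → ℝ} {f' r : ℝ} (n : ℕ) (hr : r ≠ 0)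
    (hf : HasDerivAt f f' r) :
    HasDerivAt (fun x => (x ^ n)⁻¹ * f x) (-n * ((r ^ (n + 1))⁻¹ * f r) + (r ^ n)⁻¹ * f') r := by
  refine (((hasDerivAt_pow n r).fun_inv (pow_ne_zero n hr)).fun_mul hf).congr_deriv ?_
  rcases n with _ | n
  · simp
  · rw [Nat.add_sub_cancel]
    field_simp
    ring

theorem abs_inv_pow_three_mul_le {r a x : ℝ} (hr : 0 < r) (ha : 0 < a) :
    |(r ^ 3)⁻¹ * x| ≤ ((r ^ 2)⁻¹ * x ^ 2 / a + (r ^ 4)⁻¹ * a) / 2 := by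
  have hsq : ((r ^ 2)⁻¹ * |x| ^ 2 / a + (r ^ 4)⁻¹ * a) / 2 - (r ^ 3)⁻¹ * |x|
      = (r * |x| - a) ^ 2 / (2 * r ^ 4 * a) := by
    field_simp
    ring
  rw [abs_mul, abs_of_pos (by positivity : (0 : ℝ) < (r ^ 3)⁻¹), ← sq_abs x]
  nlinarith [div_nonneg (sq_nonneg (r * |x| - a)) (by positivity : (0 : ℝ) ≤ 2 * r ^ 4 * a)]

theorem le_neg_three_mul_deriv_inv_pow_three_mul {r a x : ℝ} (hr : 0 < r) (ha : 0 < a) :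
    6 * ((r ^ 4)⁻¹ * a) - 3 / 4 * ((r ^ 2)⁻¹ * x ^ 2 / a)
      ≤ -3 * (-3 * ((r ^ 4)⁻¹ * a) + (r ^ 3)⁻¹ * x) := by
  have hsq : -3 * (-3 * ((r ^ 4)⁻¹ * a) + (r ^ 3)⁻¹ * x)
      - (6 * ((r ^ 4)⁻¹ * a) - 3 / 4 * ((r ^ 2)⁻¹ * x ^ 2 / a))
      = 3 * (r * x - 2 * a) ^ 2 / (4 * r ^ 4 * a) := by
    field_simp
    ring
  nlinarith [div_nonneg (by positivity : (0 : ℝ) ≤ 3 * (r * x - 2 * a) ^ 2)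
    (by positivity : (0 : ℝ) ≤ 4 * r ^ 4 * a)]

theorem integrableOn_inv_pow_three_mul {w v : ℝ → ℝ} {t : ℝ} (ht : 0 ≤ t) (hv : Measurable v)
    (hpos : ∀ r > t, 0 < w r)
    (hw : IntegrableOn (fun r => (r ^ 4)⁻¹ * w r) (Set.Ioi t))
    (hvw : IntegrableOn (fun r => (r ^ 2)⁻¹ * v r ^ 2 / w r) (Set.Ioi t)) :
    IntegrableOn (fun r => (r ^ 3)⁻¹ * v r) (Set.Ioi t) := by
  refine Integrable.mono' ((hvw.add hw).div_const 2)
    ((measurable_id.pow_const 3).inv.mul hv).aestronglyMeasurable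
    ((ae_restrict_iff' measurableSet_Ioi).2 (ae_of_all _ fun r hr => ?_))
  exact abs_inv_pow_three_mul_le (ht.trans_lt hr) (hpos r hr)

theorem integral_Ioi_le_of_tendsto_inv_pow_three_mul {w : ℝ → ℝ} {t : ℝ} (ht : 0 < t)
    (hw : ∀ r ≥ t, HasDerivAt w (deriv w r) r) (hpos : ∀ r > t, 0 < w r)
    (hint1 : IntegrableOn (fun r => (r ^ 4)⁻¹ * w r) (Set.Ioi t))
    (hint2 : IntegrableOn (fun r => (r ^ 2)⁻¹ * deriv w r ^ 2 / w r) (Set.Ioi t))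
    (hdecay : Tendsto (fun r => (r ^ 3)⁻¹ * w r) atTop (nhds 0)) :
    6 * (∫ r in Set.Ioi t, (r ^ 4)⁻¹ * w r)
        - 3 / 4 * (∫ r in Set.Ioi t, (r ^ 2)⁻¹ * deriv w r ^ 2 / w r)
      ≤ 3 * ((t ^ 3)⁻¹ * w t) := by
  set g' : ℝ → ℝ := fun r => -3 * ((r ^ 4)⁻¹ * w r) + (r ^ 3)⁻¹ * deriv w r
  have hg' : IntegrableOn g' (Set.Ioi t) :=
    (hint1.const_mul (-3)).add
      (integrableOn_inv_pow_three_mul ht.le (measurable_deriv w) hpos hint1 hint2)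
  have hL : IntegrableOn
      (fun r => 6 * ((r ^ 4)⁻¹ * w r) - 3 / 4 * ((r ^ 2)⁻¹ * deriv w r ^ 2 / w r)) (Set.Ioi t) :=
    (hint1.const_mul 6).sub (hint2.const_mul (3 / 4))
  have hftc : ∫ r in Set.Ioi t, g' r = 0 - (t ^ 3)⁻¹ * w t := by
    refine integral_Ioi_of_hasDerivAt_of_tendsto' (fun r hr => ?_) hg' hdecay
    refine (hasDerivAt_inv_pow_mul 3 (ht.trans_le hr).ne' (hw r hr)).congr_deriv ?_
    norm_num [g']
  calc 6 * (∫ r in Set.Ioi t, (r ^ 4)⁻¹ * w r)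
        - 3 / 4 * (∫ r in Set.Ioi t, (r ^ 2)⁻¹ * deriv w r ^ 2 / w r)
      = ∫ r in Set.Ioi t, 6 * ((r ^ 4)⁻¹ * w r) - 3 / 4 * ((r ^ 2)⁻¹ * deriv w r ^ 2 / w r) := by
        rw [integral_sub (hint1.const_mul 6) (hint2.const_mul (3 / 4)),
          integral_const_mul, integral_const_mul]
    _ ≤ ∫ r in Set.Ioi t, -3 * g' r :=
        setIntegral_mono_on hL (hg'.const_mul (-3)) measurableSet_Ioi fun r hr =>
            le_neg_three_mul_deriv_inv_pow_three_mul (ht.trans hr) (hpos r hr)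
    _ = 3 * ((t ^ 3)⁻¹ * w t) := by
        rw [integral_const_mul, hftc]
        ring

theorem monotonicity_from_integro_differential_inequality
    (w : ℝ → ℝ)
    (hw : DifferentiableOn ℝ w (Set.Ioi 0))
    (hpos : ∀ t > (0 : ℝ), 0 < w t)
    (hint1 : ∀ t > (0 : ℝ),
      IntegrableOn (fun r : ℝ => (r ^ 4)⁻¹ * w r) (Set.Ioi t))
    (hint2 : ∀ t > (0 : ℝ),
      IntegrableOn (fun r : ℝ => (r ^ 2)⁻¹ * (deriv w r) ^ 2 / w r) (Set.Ioi t))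
    (hdecay : Tendsto (fun r : ℝ => (r ^ 3)⁻¹ * w r) atTop (nhds 0))
    (hineq : ∀ t > (0 : ℝ),
      (t ^ 2)⁻¹ * deriv w t ≤
        -2 * (t ^ 3)⁻¹ * w t + 6 * (∫ r in Set.Ioi t, (r ^ 4)⁻¹ * w r)
          - (3 / 4) * (∫ r in Set.Ioi t, (r ^ 2)⁻¹ * (deriv w r) ^ 2 / w r)
          + 4 * π / t) :
    ∀ t > (0 : ℝ), deriv w t / t - w t / t ^ 2 - 4 * π ≤ 0 := by
  intro t ht
  have hbound := integral_Ioi_le_of_tendsto_inv_pow_three_mul ht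
    (fun r hr => (hw.differentiableAt (Ioi_mem_nhds (ht.trans_le hr))).hasDerivAt)
    (fun r hr => hpos r (ht.trans hr)) (hint1 t ht) (hint2 t ht) hdecay
  have hderiv : (t ^ 2)⁻¹ * deriv w t ≤ (t ^ 3)⁻¹ * w t + 4 * π / t := by
    linarith [hineq t ht]
  have hrewrite : deriv w t / t - w t / t ^ 2 - 4 * π
      = t * ((t ^ 2)⁻¹ * deriv w t - ((t ^ 3)⁻¹ * w t + 4 * π / t)) := by
    field_simp
    ring
  rw [hrewrite]
  exact mul_nonpos_of_nonneg_of_nonpos ht.le (by linarith)
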